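/- Fix T ∈ ℕ and reals ε, ρ > 0, v̄ > 0, μ̄ > 0. Let (μ_t)_{t=1}^{T+1} ⊆ [0, μ̄] and (z_t)_{t=1}^T ⊆ [0, v̄] satisfy μ_{t+1} = μ_t − ε(ρ − z_t) − P_t for some reals P_t. Let τ ≤ T be such that Σ_{t=1}^{τ} z_t ≥ ρT − v̄. Then T − τ ≤ v̄/ρ + μ̄/(ερ) + (1/(ερ)) Σ_{t=1}^{τ} P_t^+, where P_t^+ = max(P_t, 0). -/
import Mathlib


open Finset

theorem budget_depletion_time_bound (T τ : ℕ) (hτT : τ ≤ T)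
    (ε ρ vbar μbar : ℝ) (hε : 0 < ε) (hρ : 0 < ρ) (hv : 0 < vbar) (hμ : 0 < μbar)
    (μ z P : ℕ → ℝ)
    (hμbd : ∀ t, t ≤ T + 1 → μ t ∈ Set.Icc 0 μbar)
    (hzbd : ∀ t, 1 ≤ t → t ≤ T → z t ∈ Set.Icc 0 vbar)
    (hrec : ∀ t, 1 ≤ t → t ≤ T → μ (t + 1) = μ t - ε * (ρ - z t) - P t)
    (hsum : ∑ t ∈ Finset.Icc 1 τ, z t ≥ ρ * T - vbar) :
    (T : ℝ) - τ ≤ vbar / ρ + μbar / (ε * ρ) +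
      (1 / (ε * ρ)) * ∑ t ∈ Finset.Icc 1 τ, max (P t) 0 := by
  set S := ∑ t ∈ Finset.Icc 1 τ, max (P t) 0 with hS
  -- telescoping identity
  have key : ε * ((∑ t ∈ Finset.Icc 1 τ, z t) - ρ * τ)
      = μ (τ + 1) - μ 1 + ∑ t ∈ Finset.Icc 1 τ, P t := by
    have h1 : ∑ t ∈ Finset.Icc 1 τ, (μ (t + 1) - μ t) = μ (τ + 1) - μ 1 := by
      rw [← Finset.Ico_add_one_right_eq_Icc, Finset.sum_Ico_eq_sum_range]
      simp only [Nat.add_sub_cancel, Nat.succ_sub_one]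
      calc ∑ i ∈ Finset.range τ, (μ (1 + i + 1) - μ (1 + i))
          = ∑ i ∈ Finset.range τ, (μ (i + 1 + 1) - μ (i + 1)) := by
            apply Finset.sum_congr rfl; intro i _; rw [Nat.add_comm 1 i]
        _ = μ (τ + 1) - μ 1 := Finset.sum_range_sub (fun i => μ (i + 1)) τ
    have h2 : ∀ t ∈ Finset.Icc 1 τ, μ (t + 1) - μ t = ε * (z t - ρ) - P t := by
      intro t ht
      simp only [Finset.mem_Icc] at ht
      rw [hrec t ht.1 (by omega)]; ring
    rw [Finset.sum_congr rfl h2] at h1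
    have h3 : ∑ t ∈ Finset.Icc 1 τ, (ε * (z t - ρ) - P t)
        = ε * ((∑ t ∈ Finset.Icc 1 τ, z t) - ρ * τ) - ∑ t ∈ Finset.Icc 1 τ, P t := by
      rw [Finset.sum_sub_distrib, ← Finset.mul_sum, Finset.sum_sub_distrib,
        Finset.sum_const, Nat.card_Icc, Nat.add_sub_cancel, nsmul_eq_mul]
      ring
    rw [h3] at h1
    linarith
  have hμτ : μ (τ + 1) ≤ μbar := (hμbd (τ + 1) (by omega)).2
  have hμ1 : 0 ≤ μ 1 := (hμbd 1 (by omega)).1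
  have hPS : ∑ t ∈ Finset.Icc 1 τ, P t ≤ S :=
    Finset.sum_le_sum fun t _ => le_max_left _ _
  have hεz : ε * (ρ * T - vbar - ρ * τ) ≤ μbar + S := by
    have : ε * (ρ * T - vbar - ρ * τ) ≤ ε * ((∑ t ∈ Finset.Icc 1 τ, z t) - ρ * τ) := by
      apply mul_le_mul_of_nonneg_left _ hε.le
      linarith [hsum]
    calc ε * (ρ * T - vbar - ρ * τ) ≤ μ (τ + 1) - μ 1 + ∑ t ∈ Finset.Icc 1 τ, P t := by
          rw [← key]; exact this
      _ ≤ μbar + S := by linarith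
  have hpos : 0 < ε * ρ := by positivity
  rw [div_add_div _ _ (ne_of_gt hρ) (ne_of_gt hpos)]
  have heq : vbar * (ε * ρ) + ρ * μbar = ρ * (ε * vbar + μbar) := by ring
  have : (T : ℝ) - τ ≤ (ε * vbar + μbar + S) / (ε * ρ) := by
    rw [le_div_iff₀ hpos]
    nlinarith [hεz]
  calc (T : ℝ) - τ ≤ (ε * vbar + μbar + S) / (ε * ρ) := this
    _ = (vbar * (ε * ρ) + ρ * μbar) / (ρ * (ε * ρ)) + 1 / (ε * ρ) * S := by
        field_simp
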